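/- (Coverage in cochannel single-band case) If all K tiers use a common band with path-loss exponent α > 2, the coverage fraction of tier k is π_k = λ_k (Z_k P_k)^{2/α} / Σ_{ℓ=1}^K λ_ℓ (Z_ℓ P_ℓ)^{2/α}. Consequently π_k is strictly increasing in Z_k, and π_k → 1 as Z_k → ∞. -/

import Mathlib

/-!
The sum in the exponent is `s = S / (Z_kP_k)^{2/α}` with `S = Σ_ℓ λ_ℓ (Z_ℓP_ℓ)^{2/α}`. As
`2πs r exp(-πs r²)` is the density of the distance to the nearest point of a planar Poisson
process of intensity `s`, `2π ∫ r exp(-πs r²) dr = 1/s`, whence `π_k = λ_k (Z_kP_k)^{2/α} / S`.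
Splitting `S = x + B` into the tier-`k` term `x` and the others `B > 0`, `π_k = x / (x + B)`
increases to `1` as `x → ∞`, and `x` grows with `Z_k` like `Z_k^{2/α}`.
-/

open MeasureTheory Set Filter Topology Real

theorem integral_Ioi_mul_exp_neg_mul_sq {b : ℝ} (hb : 0 < b) :
    ∫ r in Ioi (0 : ℝ), r * exp (-b * r ^ 2) = (2 * b)⁻¹ := by
  have h := integral_rpow_mul_exp_neg_mul_rpow (q := 1) two_pos (by norm_num) hb
  norm_num [rpow_neg_one] at h
  simpa [neg_mul, mul_comm] using h

theorem two_pi_mul_integral_Ioi_mul_exp_neg_pi_mul_sq_mul {s : ℝ} (hs : 0 < s) :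
    2 * π * ∫ r in Ioi (0 : ℝ), r * exp (-(π * r ^ 2 * s)) = s⁻¹ := by
  have h := integral_Ioi_mul_exp_neg_mul_sq (mul_pos pi_pos hs)
  simp only [neg_mul] at h
  simp only [mul_right_comm π, h]
  field_simp

theorem Finset.sum_mul_div_rpow {ι : Type*} (s : Finset ι) (w x : ι → ℝ) {y p : ℝ}
    (hx : ∀ i ∈ s, 0 ≤ x i) (hy : 0 ≤ y) :
    ∑ i ∈ s, w i * (x i / y) ^ p = (∑ i ∈ s, w i * x i ^ p) / y ^ p := by
  rw [Finset.sum_div]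
  exact Finset.sum_congr rfl fun i hi => by rw [div_rpow (hx i hi) hy, mul_div_assoc]

theorem strictMonoOn_div_add_const {B : ℝ} (hB : 0 < B) :
    StrictMonoOn (fun x : ℝ => x / (x + B)) (Ioi (-B)) := by
  intro x hx y hy hxy
  simp only [mem_Ioi] at hx hy
  rw [div_lt_div_iff₀ (by linarith) (by linarith)]
  nlinarith

theorem tendsto_div_add_const_atTop (B : ℝ) :
    Tendsto (fun x : ℝ => x / (x + B)) atTop (𝓝 1) := by
  have hshift : Tendsto (fun x : ℝ => x + B) atTop atTop :=
    tendsto_atTop_add_const_right _ B tendsto_id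
  have h : Tendsto (fun x : ℝ => 1 - B / (x + B)) atTop (𝓝 (1 - 0)) :=
    tendsto_const_nhds.sub (tendsto_const_nhds.div_atTop hshift)
  rw [sub_zero] at h
  refine h.congr' ?_
  filter_upwards [hshift.eventually_ne_atTop 0] with x hx
  field_simp
  ring

section PowerGrowth

variable {a b p : ℝ}

theorem strictMonoOn_const_mul_mul_rpow (ha : 0 < a) (hb : 0 < b) (hp : 0 < p) :
    StrictMonoOn (fun z : ℝ => a * (z * b) ^ p) (Ici 0) := fun _ hx _ _ hxy =>
  mul_lt_mul_of_pos_left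
    (rpow_lt_rpow (mul_nonneg hx hb.le) (mul_lt_mul_of_pos_right hxy hb) hp) ha

theorem tendsto_const_mul_mul_rpow_atTop (ha : 0 < a) (hb : 0 < b) (hp : 0 < p) :
    Tendsto (fun z : ℝ => a * (z * b) ^ p) atTop atTop :=
  ((tendsto_rpow_atTop hp).comp (tendsto_id.atTop_mul_const hb)).const_mul_atTop ha

end PowerGrowth

/-- (Coverage in the cochannel single-band case.) If all `K ≥ 2` tiers use a common band
with path-loss exponent `α > 2`, then the coverage fraction of tier `k`,
`π_k = 2πλ_k ∫₀^∞ r exp(-π r² Σ_ℓ λ_ℓ (Z_ℓP_ℓ/Z_kP_k)^{2/α}) dr`, has the closed form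
`λ_k (Z_kP_k)^{2/α} / Σ_ℓ λ_ℓ (Z_ℓP_ℓ)^{2/α}`; consequently `π_k` is strictly increasing in
`Z_k` and tends to `1` as `Z_k → ∞`. -/
theorem stmt15 (K : ℕ) (hK : 1 < K) (lam P Z : Fin K → ℝ)
    (hlam : ∀ ℓ, 0 < lam ℓ) (hP : ∀ ℓ, 0 < P ℓ) (hZ : ∀ ℓ, 0 < Z ℓ)
    (α : ℝ) (hα : 2 < α) (k : Fin K) :
    (2 * Real.pi * lam k * ∫ r in Ioi (0 : ℝ),
        r * Real.exp (-(Real.pi * r ^ 2 *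
          ∑ ℓ, lam ℓ * (Z ℓ * P ℓ / (Z k * P k)) ^ (2 / α)))
      = lam k * (Z k * P k) ^ (2 / α) / ∑ ℓ, lam ℓ * (Z ℓ * P ℓ) ^ (2 / α))
    ∧ StrictMonoOn (fun z : ℝ =>
        lam k * (z * P k) ^ (2 / α)
          / (lam k * (z * P k) ^ (2 / α)
              + ∑ ℓ ∈ Finset.univ.erase k, lam ℓ * (Z ℓ * P ℓ) ^ (2 / α))) (Ioi 0)
    ∧ Filter.Tendsto (fun z : ℝ =>
        lam k * (z * P k) ^ (2 / α)
          / (lam k * (z * P k) ^ (2 / α)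
              + ∑ ℓ ∈ Finset.univ.erase k, lam ℓ * (Z ℓ * P ℓ) ^ (2 / α)))
        Filter.atTop (nhds 1) := by
  have : Nontrivial (Fin K) := Fin.nontrivial_iff_two_le.mpr hK
  have hp : 0 < 2 / α := by positivity
  have hZP ℓ : 0 < Z ℓ * P ℓ := mul_pos (hZ ℓ) (hP ℓ)
  have hw ℓ : 0 < lam ℓ * (Z ℓ * P ℓ) ^ (2 / α) :=
    mul_pos (hlam ℓ) (rpow_pos_of_pos (hZP ℓ) _)
  have hS : 0 < ∑ ℓ, lam ℓ * (Z ℓ * P ℓ) ^ (2 / α) :=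
    Finset.sum_pos (fun ℓ _ => hw ℓ) Finset.univ_nonempty
  have hB : 0 < ∑ ℓ ∈ Finset.univ.erase k, lam ℓ * (Z ℓ * P ℓ) ^ (2 / α) :=
    Finset.sum_pos (fun ℓ _ => hw ℓ) Finset.univ_nontrivial.erase_nonempty
  have hx z (hz : 0 < z) : 0 < lam k * (z * P k) ^ (2 / α) :=
    mul_pos (hlam k) (rpow_pos_of_pos (mul_pos hz (hP k)) _)
  refine ⟨?_, ?_, ?_⟩
  · rw [Finset.sum_mul_div_rpow _ _ _ (fun ℓ _ => (hZP ℓ).le) (hZP k).le,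
      mul_right_comm _ (lam k), mul_comm _ (lam k),
      two_pi_mul_integral_Ioi_mul_exp_neg_pi_mul_sq_mul (div_pos hS (rpow_pos_of_pos (hZP k) _)),
      inv_div, mul_div_assoc]
  · exact (strictMonoOn_div_add_const hB).comp
      ((strictMonoOn_const_mul_mul_rpow (hlam k) (hP k) hp).mono Ioi_subset_Ici_self)
      fun z hz => (neg_neg_of_pos hB).trans (hx z hz)
  · exact (tendsto_div_add_const_atTop _).comp
      (tendsto_const_mul_mul_rpow_atTop (hlam k) (hP k) hp)
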